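/- Let n ≥ 1 and m ≥ 1, let e = (e_1,…,e_n) be in J_n and f = (f_1,…,f_m) be in J_m, and set k = first(e) and ℓ = first(f). Define g of length n+m by g = (e_1,…,e_k, f_1,…,f_m, ẽ_{k+1},…,ẽ_n), where ẽ_i = e_i + m if e_i > 0 and ẽ_i = 0 if e_i = 0. Then g is an inversion sequence of length n+m avoiding both 101 and 021 (i.e., g is in J_{n+m}) and first(g) = k + ℓ. -/

import Mathlib

/-- An `F`-step: `(0,1)` or `(a,b)` with `a ≥ 1` and `b ≤ 1`. -/
def IsFStep (s : ℤ × ℤ) : Prop := s = (0, 1) ∨ (1 ≤ s.1 ∧ s.2 ≤ 1)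

/-- An `F`-path: a sequence of `F`-steps whose prefix sums satisfy
`a_1 + ⋯ + a_i ≤ b_1 + ⋯ + b_i`. -/
def IsFPath (Q : List (ℤ × ℤ)) : Prop :=
  (∀ s ∈ Q, IsFStep s) ∧
  ∀ i : ℕ, ((Q.take i).map Prod.fst).sum ≤ ((Q.take i).map Prod.snd).sum

/-- The set of `F`-paths of length `n`. -/
def FPaths (n : ℕ) : Set (List (ℤ × ℤ)) := {Q | Q.length = n ∧ IsFPath Q}

def fheight (Q : List (ℤ × ℤ)) : ℤ := (Q.map Prod.snd).sum - (Q.map Prod.fst).sum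

def fnorth (Q : List (ℤ × ℤ)) : ℕ := Q.countP (fun s => decide (s = ((0 : ℤ), (1 : ℤ))))

def faone (Q : List (ℤ × ℤ)) : ℕ := Q.countP (fun s => decide (s.1 = 1))

def fbone (Q : List (ℤ × ℤ)) : ℕ := Q.countP (fun s => decide (s.2 = 1))

/-- Steps of a Schröder path. -/
inductive SStep : Type
  | u | d | h
deriving DecidableEq

/-- The width of a Schröder step. -/
def swidth : SStep → ℕ
  | .u => 1
  | .d => 1
  | .h => 2

/-- The height-change of a Schröder step. -/
def shc : SStep → ℤ
  | .u => 1
  | .d => -1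
  | .h => 0

/-- A Schröder path of semilength `n`. -/
def IsSchroder (n : ℕ) (P : List SStep) : Prop :=
  (P.map swidth).sum = 2 * n ∧ (P.map shc).sum = 0 ∧
  ∀ i : ℕ, 0 ≤ ((P.take i).map shc).sum

/-- Schröder paths of semilength `n` without triple descents. -/
def SchP (n : ℕ) : Set (List SStep) :=
  {P | IsSchroder n P ∧ ¬ [SStep.d, SStep.d, SStep.d] <:+: P}

/-- Number of `h` letters preceded by a prefix of total height-change `0`. -/
noncomputable def scomp (P : List SStep) : ℕ :=
  Set.ncard {i : ℕ | P[i]? = some SStep.h ∧ ((P.take i).map shc).sum = 0}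

/-- Number of `h` letters plus number of double descents. -/
noncomputable def shdd (P : List SStep) : ℕ :=
  P.countP (fun s => decide (s = SStep.h)) +
    Set.ncard {i : ℕ | P[i]? = some SStep.d ∧ P[i + 1]? = some SStep.d}

/-- Number of peaks `ud`. -/
noncomputable def speak (P : List SStep) : ℕ :=
  Set.ncard {i : ℕ | P[i]? = some SStep.u ∧ P[i + 1]? = some SStep.d}

/-- Steps of a bicolored Dyck path: up, red down, black down. -/
inductive BStep : Type
  | u | dR | dB
deriving DecidableEq

/-- A restricted bicolored Dyck path of semilength `n`:
`u^{i_1} dR^{j_1} dB^{k_1} ⋯ u^{i_{ℓ-1}} dR^{j_{ℓ-1}} dB^{k_{ℓ-1}} u^{i_ℓ} dR^{j_ℓ}`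
with positive `i`'s and `k`'s, `∑ i = n`, `∑ j + ∑ k = n`, and every prefix having
at least as many `u`'s as down steps. -/
def IsRBD (n : ℕ) (B : List BStep) : Prop :=
  (∃ (blocks : List (ℕ × ℕ × ℕ)) (iL jL : ℕ),
    (∀ t ∈ blocks, 1 ≤ t.1 ∧ 1 ≤ t.2.2) ∧ 1 ≤ iL ∧
    B = (blocks.map (fun t =>
        List.replicate t.1 BStep.u ++ List.replicate t.2.1 BStep.dR ++
          List.replicate t.2.2 BStep.dB)).flatten ++
        (List.replicate iL BStep.u ++ List.replicate jL BStep.dR) ∧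
    (blocks.map (fun t => t.1)).sum + iL = n ∧
    (blocks.map (fun t => t.2.1)).sum + jL + (blocks.map (fun t => t.2.2)).sum = n) ∧
  ∀ i : ℕ, (B.take i).countP (fun s => decide (s ≠ BStep.u)) ≤
    (B.take i).countP (fun s => decide (s = BStep.u))

/-- The length of the final run of red down steps. -/
def blast (B : List BStep) : ℕ := (B.reverse.takeWhile (fun s => decide (s = BStep.dR))).length

/-- The number of double ascents `uu`. -/
noncomputable def bdasc (B : List BStep) : ℕ :=
  Set.ncard {i : ℕ | B[i]? = some BStep.u ∧ B[i + 1]? = some BStep.u}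

/-- The number of occurrences of `u dB u` or `dR dB u`. -/
noncomputable def bbval (B : List BStep) : ℕ :=
  Set.ncard {i : ℕ | (B[i]? = some BStep.u ∨ B[i]? = some BStep.dR) ∧
    B[i + 1]? = some BStep.dB ∧ B[i + 2]? = some BStep.u}

/-- `π : ℕ → ℕ` encodes a permutation of `{1,…,N}`, with value `0` outside
(in particular `π 0 = 0`). -/
def IsPermOn (N : ℕ) (π : ℕ → ℕ) : Prop :=
  Set.BijOn π (Set.Icc 1 N) (Set.Icc 1 N) ∧ ∀ i, i ∉ Set.Icc 1 N → π i = 0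

/-- `π` contains the pattern given by the word `σ`. -/
def ContainsPat (N : ℕ) (π : ℕ → ℕ) (σ : List ℕ) : Prop :=
  ∃ f : Fin σ.length → ℕ, StrictMono f ∧ (∀ t, f t ∈ Set.Icc 1 N) ∧
    ∀ s t : Fin σ.length, π (f s) < π (f t) ↔ σ.get s < σ.get t

/-- Permutations of `{1,…,N}` avoiding the patterns `2341`, `2431` and `3241`. -/
def PermSet (N : ℕ) : Set (ℕ → ℕ) :=
  {π | IsPermOn N π ∧ ¬ContainsPat N π [2, 3, 4, 1] ∧ ¬ContainsPat N π [2, 4, 3, 1] ∧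
    ¬ContainsPat N π [3, 2, 4, 1]}

/-- `block(π)`: the number of `j ∈ {1,…,N}` with `{π(1),…,π(j)} = {1,…,j}`. -/
noncomputable def blockStat (N : ℕ) (π : ℕ → ℕ) : ℕ :=
  Set.ncard {j : ℕ | 1 ≤ j ∧ j ≤ N ∧ π '' Set.Icc 1 j = Set.Icc 1 j}

/-- `asc(π)`: the number of ascents of `π`. -/
noncomputable def ascStat (N : ℕ) (π : ℕ → ℕ) : ℕ :=
  Set.ncard {i : ℕ | 1 ≤ i ∧ i + 1 ≤ N ∧ π i < π (i + 1)}

/-- `crit(π)`: the number of critical entries of `π`. -/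
noncomputable def critStat (N : ℕ) (π : ℕ → ℕ) : ℕ :=
  Set.ncard {i : ℕ | 1 ≤ i ∧ i ≤ N ∧ ∀ j k : ℕ, 1 ≤ j → j < i → i < k → k ≤ N →
    π j < π i → π k < π i → π j < π k}

/-- An inversion sequence: `0 ≤ e_i < i` (1-indexed). -/
def IsInvSeq (e : List ℕ) : Prop := ∀ i : Fin e.length, e.get i < i.val + 1

/-- `e` contains the pattern `101`. -/
def Contains101 (e : List ℕ) : Prop :=
  ∃ i j k : Fin e.length, i < j ∧ j < k ∧ e.get j < e.get i ∧ e.get i = e.get k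

/-- `e` contains the pattern `102`. -/
def Contains102 (e : List ℕ) : Prop :=
  ∃ i j k : Fin e.length, i < j ∧ j < k ∧ e.get j < e.get i ∧ e.get i < e.get k

/-- `e` contains the pattern `021`. -/
def Contains021 (e : List ℕ) : Prop :=
  ∃ i j k : Fin e.length, i < j ∧ j < k ∧ e.get i < e.get k ∧ e.get k < e.get j

/-- Inversion sequences of length `n` avoiding `101` and `102`. -/
def ISet (n : ℕ) : Set (List ℕ) :=
  {e | e.length = n ∧ IsInvSeq e ∧ ¬Contains101 e ∧ ¬Contains102 e}

/-- Inversion sequences of length `n` avoiding `101` and `021`. -/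
def JSet (n : ℕ) : Set (List ℕ) :=
  {e | e.length = n ∧ IsInvSeq e ∧ ¬Contains101 e ∧ ¬Contains021 e}

/-- The largest entry of `e` (`0` for the empty sequence). -/
def maxVal (e : List ℕ) : ℕ := e.foldr max 0

/-- The largest (1-indexed) position of the maximal entry of `e`. -/
def maxid (e : List ℕ) : ℕ := e.length - e.reverse.idxOf (maxVal e)

/-- `e` with the entry at position `maxid e` removed. -/
def ehat (e : List ℕ) : List ℕ := e.eraseIdx (maxid e - 1)

/-- `omi(e)`: the number of `i ∈ {1,…,n}` not occurring as an entry of `e`. -/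
noncomputable def omi (e : List ℕ) : ℕ := Set.ncard {i : ℕ | 1 ≤ i ∧ i ≤ e.length ∧ i ∉ e}

/-- `cons(e)`: the number of `i ∈ {1,…,n-1}` such that both `i-1` and `i` occur in `e`. -/
noncomputable def consStat (e : List ℕ) : ℕ :=
  Set.ncard {i : ℕ | 1 ≤ i ∧ i + 1 ≤ e.length ∧ (i - 1) ∈ e ∧ i ∈ e}

/-- `first(e)`: the length of the initial run of zeros of `e`. -/
def firstStat (e : List ℕ) : ℕ := (e.takeWhile (fun v => decide (v = 0))).length

/-- `single(e)`: the number of positive integers occurring exactly once in `e`. -/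
noncomputable def singleStat (e : List ℕ) : ℕ := Set.ncard {v : ℕ | 1 ≤ v ∧ e.count v = 1}

/-- The binomial coefficient `C(p,q)`, interpreted as `0` unless `0 ≤ q ≤ p`. -/
def C (p q : ℤ) : ℤ := if 0 ≤ q ∧ q ≤ p then (p.toNat.choose q.toNat : ℤ) else 0

/-!
A pattern occurrence is a three-element sublist. In the direct sum the positive entries coming
from `f` are smaller than the length `m` of `f`, while those coming from `e` exceed `m`; so an
occurrence of `101`, whose outer entries are equal and positive, lies entirely inside `f` or inside
the shifted copy of `e`. For an inversion sequence, avoiding `021` says exactly that its positive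
entries are weakly increasing, and the positive entries of the direct sum are those of `f`
followed by the shifted ones of `e`.
-/

open List

theorem exists_get_lt_lt_iff_sublist {α : Type*} (l : List α) (P : α → α → α → Prop) :
    (∃ i j k : Fin l.length, i < j ∧ j < k ∧ P (l.get i) (l.get j) (l.get k)) ↔
      ∃ a b c, [a, b, c] <+ l ∧ P a b c := by
  constructor
  · rintro ⟨i, j, k, hij, hjk, hP⟩
    exact ⟨_, _, _, map_getElem_sublist (is := [i, j, k]) (by simp [hij, hjk, hij.trans hjk]), hP⟩
  · rintro ⟨a, b, c, hs, hP⟩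
    obtain ⟨is, his, hmono⟩ := sublist_eq_map_getElem hs
    rcases is with _ | ⟨i, _ | ⟨j, _ | ⟨k, _ | _⟩⟩⟩ <;> simp at his
    obtain ⟨rfl, rfl, rfl⟩ := his
    simp only [pairwise_cons, mem_cons, forall_eq_or_imp] at hmono
    exact ⟨i, j, k, hmono.1.1, hmono.2.1.1, hP⟩

theorem contains101_iff_sublist {l : List ℕ} :
    Contains101 l ↔ ∃ a b c, [a, b, c] <+ l ∧ b < a ∧ a = c :=
  exists_get_lt_lt_iff_sublist l fun a b c => b < a ∧ a = c

theorem contains021_iff_sublist {l : List ℕ} :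
    Contains021 l ↔ ∃ a b c, [a, b, c] <+ l ∧ a < c ∧ c < b :=
  exists_get_lt_lt_iff_sublist l fun a b c => a < c ∧ c < b

theorem Contains101.of_sublist {l l' : List ℕ} (hl : l <+ l') (h : Contains101 l) :
    Contains101 l' := by
  obtain ⟨a, b, c, hs, hP⟩ := contains101_iff_sublist.1 h
  exact contains101_iff_sublist.2 ⟨a, b, c, hs.trans hl, hP⟩

theorem Contains101.of_map {φ : ℕ → ℕ} (hφ : StrictMono φ) {l : List ℕ}
    (h : Contains101 (l.map φ)) : Contains101 l := by
  obtain ⟨_, _, _, hs, hlt, heq⟩ := contains101_iff_sublist.1 h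
  obtain ⟨l', hl', hmap⟩ := sublist_map_iff.1 hs
  rcases l' with _ | ⟨a, _ | ⟨b, _ | ⟨c, _ | _⟩⟩⟩ <;> simp only [map_cons, map_nil, reduceCtorEq,
    cons.injEq, and_false, and_true] at hmap
  obtain ⟨rfl, rfl, rfl⟩ := hmap
  exact contains101_iff_sublist.2 ⟨a, b, c, hl', hφ.lt_iff_lt.1 hlt, hφ.injective heq⟩

theorem not_contains101_replicate (k a : ℕ) : ¬Contains101 (replicate k a) := by
  intro h
  obtain ⟨_, _, _, hs, hlt, -⟩ := contains101_iff_sublist.1 h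
  obtain ⟨_, -, hrep⟩ := sublist_replicate_iff.1 hs
  obtain ⟨-, hall⟩ := eq_replicate_iff.1 hrep
  simp only [mem_cons, forall_eq_or_imp] at hall
  omega

theorem Contains101.of_append {u v : List ℕ} (huv : ∀ x ∈ u, x ∈ v → x = 0)
    (h : Contains101 (u ++ v)) : Contains101 u ∨ Contains101 v := by
  obtain ⟨a, b, c, hs, hba, rfl⟩ := contains101_iff_sublist.1 h
  obtain ⟨l₁, l₂, hsplit, hu, hv⟩ := sublist_append_iff.1 hs
  have hshared : a ∈ u → a ∈ v → False := fun hau hav => by have := huv a hau hav; omega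
  rcases l₁ with _ | ⟨x, _ | ⟨y, _ | ⟨z, _ | _⟩⟩⟩ <;>
    simp only [nil_append, cons_append, cons.injEq, reduceCtorEq, and_false] at hsplit
  · exact .inr (contains101_iff_sublist.2 ⟨a, b, a, hsplit ▸ hv, hba, rfl⟩)
  · obtain ⟨rfl, rfl⟩ := hsplit
    exact (hshared (hu.subset (by simp)) (hv.subset (by simp))).elim
  · obtain ⟨rfl, rfl, rfl⟩ := hsplit
    exact (hshared (hu.subset (by simp)) (hv.subset (by simp))).elim
  · obtain ⟨rfl, rfl, rfl, rfl⟩ := hsplit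
    exact .inl (contains101_iff_sublist.2 ⟨_, _, _, hu, hba, rfl⟩)

theorem isInvSeq_iff {l : List ℕ} : IsInvSeq l ↔ ∀ i (h : i < l.length), l[i] ≤ i := by
  simp only [IsInvSeq, Fin.forall_iff, get_eq_getElem, Nat.lt_succ_iff]

theorem IsInvSeq.append {u v : List ℕ} (hu : IsInvSeq u)
    (hv : ∀ i (h : i < v.length), v[i] ≤ u.length + i) : IsInvSeq (u ++ v) := by
  rw [isInvSeq_iff] at hu ⊢
  intro i hi
  rw [getElem_append]
  split_ifs with h
  · exact hu i h
  · have := hv (i - u.length) (by simp at hi; omega)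
    omega

theorem isInvSeq_replicate_zero (k : ℕ) : IsInvSeq (replicate k 0) :=
  isInvSeq_iff.2 fun i _ => by simp

theorem IsInvSeq.lt_length_of_mem {l : List ℕ} (hl : IsInvSeq l) {x : ℕ} (hx : x ∈ l) :
    x < l.length := by
  obtain ⟨i, hi, rfl⟩ := getElem_of_mem hx
  exact (isInvSeq_iff.1 hl i hi).trans_lt hi

theorem IsInvSeq.eq_nil_or_eq_zero_cons {l : List ℕ} (hl : IsInvSeq l) :
    l = [] ∨ ∃ t, l = 0 :: t := by
  rcases l with _ | ⟨a, t⟩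
  · exact .inl rfl
  · have := isInvSeq_iff.1 hl 0 (by simp)
    simp only [getElem_cons_zero, nonpos_iff_eq_zero] at this
    exact .inr ⟨t, by rw [this]⟩

/-- An occurrence of `021` in an inversion sequence can always be moved to start at the leading
`0`. -/
theorem IsInvSeq.not_contains021_iff {l : List ℕ} (hl : IsInvSeq l) :
    ¬Contains021 l ↔ (l.filter (· ≠ 0)).Pairwise (· ≤ ·) := by
  rw [contains021_iff_sublist, pairwise_filter, pairwise_iff_forall_sublist]
  simp only [ne_eq, decide_not, Bool.not_eq_eq_eq_not, Bool.not_true, decide_eq_false_iff_not]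
  constructor
  · intro h x y hxy hx hy
    by_contra! hyx
    rcases hl.eq_nil_or_eq_zero_cons with rfl | ⟨t, rfl⟩
    · simp at hxy
    rcases sublist_cons_iff.1 hxy with hxy | ⟨_, hx0, -⟩
    · exact h ⟨0, x, y, hxy.cons_cons 0, Nat.pos_of_ne_zero hy, hyx⟩
    · exact hx (cons.inj hx0).1
  · rintro h ⟨a, b, c, habc, hac, hcb⟩
    have hbc : [b, c] <+ l := (sublist_cons_self a [b, c]).trans habc
    have := h hbc (by omega) (by omega)
    omega

theorem take_firstStat (l : List ℕ) : l.take (firstStat l) = replicate (firstStat l) 0 := by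
  rw [firstStat, ← prefix_iff_eq_take.1 (takeWhile_prefix _), eq_replicate_iff]
  exact ⟨rfl, fun x hx => by simpa using mem_takeWhile_imp hx⟩

theorem firstStat_append (u v : List ℕ) :
    firstStat (u ++ v) = if firstStat u = u.length then u.length + firstStat v else firstStat u := by
  unfold firstStat
  rw [takeWhile_append]
  split_ifs <;> simp

theorem firstStat_replicate_zero (k : ℕ) : firstStat (replicate k 0) = k := by
  simp [firstStat]

theorem firstStat_map {φ : ℕ → ℕ} (hφ : ∀ x, φ x = 0 ↔ x = 0) (l : List ℕ) :
    firstStat (l.map φ) = firstStat l := by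
  simp [firstStat, takeWhile_map, Function.comp_def, hφ]

theorem firstStat_drop_firstStat (l : List ℕ) : firstStat (l.drop (firstStat l)) = 0 := by
  have hdrop : l.drop (firstStat l) = l.dropWhile (· = 0) := by
    rw [firstStat]
    nth_rw 2 [← takeWhile_append_dropWhile (p := (· = 0)) (l := l)]
    exact drop_left
  rw [hdrop]
  cases hd : l.dropWhile (· = 0) with
  | nil => rfl
  | cons a t =>
    have := head_dropWhile_not (· = 0) (l := l) (by simp [hd])
    simp_all [firstStat]

def shiftPos (m v : ℕ) : ℕ := if v = 0 then 0 else v + m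

theorem strictMono_shiftPos (m : ℕ) : StrictMono (shiftPos m) := by
  intro v w hvw
  unfold shiftPos
  split_ifs <;> omega

theorem shiftPos_eq_zero_iff {m v : ℕ} : shiftPos m v = 0 ↔ v = 0 := by
  unfold shiftPos
  split_ifs <;> omega

theorem shiftPos_le {m v : ℕ} : shiftPos m v ≤ v + m := by
  unfold shiftPos
  split_ifs <;> omega

theorem lt_shiftPos {m v : ℕ} (hv : v ≠ 0) : m < shiftPos m v := by
  unfold shiftPos
  split_ifs <;> omega

def directSum (e f : List ℕ) : List ℕ :=
  replicate (firstStat e) 0 ++ f ++ (e.drop (firstStat e)).map (shiftPos f.length)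

section directSum

variable {e f : List ℕ}

theorem length_directSum : (directSum e f).length = e.length + f.length := by
  have : firstStat e ≤ e.length := (takeWhile_prefix _).length_le
  simp only [directSum, length_append, length_replicate, length_map, length_drop]
  omega

theorem IsInvSeq.directSum (he : IsInvSeq e) (hf : IsInvSeq f) : IsInvSeq (directSum e f) := by
  refine ((isInvSeq_replicate_zero _).append fun i hi => ?_).append fun i hi => ?_
  · have := isInvSeq_iff.1 hf i hi
    omega
  · have hi' : firstStat e + i < e.length := by simp at hi; omega
    have := isInvSeq_iff.1 he (firstStat e + i) hi'
    simp only [getElem_map, getElem_drop, length_append, length_replicate]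
    have := shiftPos_le (m := f.length) (v := e[firstStat e + i])
    omega

theorem not_contains101_directSum (hf : IsInvSeq f) (he101 : ¬Contains101 e)
    (hf101 : ¬Contains101 f) : ¬Contains101 (directSum e f) := by
  intro h
  have hsep : ∀ x ∈ replicate (firstStat e) 0 ++ f,
      x ∈ (e.drop (firstStat e)).map (shiftPos f.length) → x = 0 := by
    intro x hx hx'
    obtain ⟨v, -, rfl⟩ := mem_map.1 hx'
    by_contra hne
    have hv : v ≠ 0 := fun hv => hne (shiftPos_eq_zero_iff.2 hv)
    have := lt_shiftPos (m := f.length) hv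
    rcases mem_append.1 hx with hx | hx
    · exact hne (eq_of_mem_replicate hx)
    · have := hf.lt_length_of_mem hx
      omega
  rcases h.of_append hsep with h | h
  · rcases h.of_append fun x hx _ => eq_of_mem_replicate hx with h | h
    · exact not_contains101_replicate _ _ h
    · exact hf101 h
  · exact he101 ((h.of_map (strictMono_shiftPos _)).of_sublist (drop_sublist _ _))

theorem not_contains021_directSum (he : IsInvSeq e) (hf : IsInvSeq f)
    (he021 : ¬Contains021 e) (hf021 : ¬Contains021 f) : ¬Contains021 (directSum e f) := by
  rw [(he.directSum hf).not_contains021_iff]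
  rw [he.not_contains021_iff] at he021
  rw [hf.not_contains021_iff] at hf021
  have hfilter : (directSum e f).filter (· ≠ 0) =
      f.filter (· ≠ 0) ++ ((e.drop (firstStat e)).filter (· ≠ 0)).map (shiftPos f.length) := by
    have hφ : ((· ≠ 0) ∘ shiftPos f.length : ℕ → Bool) = (· ≠ 0) := by
      funext v
      simp [shiftPos_eq_zero_iff]
    simp only [directSum, filter_append, filter_replicate, filter_map, hφ]
    simp
  have he021' : ((e.drop (firstStat e)).filter (· ≠ 0)).Pairwise (· ≤ ·) :=
    he021.sublist ((drop_sublist _ _).filter _)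
  rw [hfilter, pairwise_append, pairwise_map]
  refine ⟨hf021, he021'.imp (strictMono_shiftPos _).monotone.imp, ?_⟩
  intro a ha b hb
  obtain ⟨v, hv, rfl⟩ := mem_map.1 hb
  have := hf.lt_length_of_mem (mem_of_mem_filter ha)
  have := lt_shiftPos (m := f.length) (by simpa using (mem_filter.1 hv).2)
  omega

theorem firstStat_directSum : firstStat (directSum e f) = firstStat e + firstStat f := by
  have hrest : firstStat ((e.drop (firstStat e)).map (shiftPos f.length)) = 0 := by
    rw [firstStat_map (fun _ => shiftPos_eq_zero_iff), firstStat_drop_firstStat]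
  rw [directSum, append_assoc, firstStat_append, firstStat_replicate_zero, length_replicate,
    if_pos rfl, firstStat_append, hrest]
  split_ifs <;> omega

end directSum

theorem inv021_direct_sum_general (n m : ℕ) (e f : List ℕ)
    (he : e ∈ JSet n) (hf : f ∈ JSet m)
    (k l : ℕ) (hk : k = firstStat e) (hl : l = firstStat f)
    (g : List ℕ)
    (hg : g = e.take k ++ f ++ (e.drop k).map (fun v => if v = 0 then 0 else v + m)) :
    g ∈ JSet (n + m) ∧ firstStat g = k + l := by
  obtain ⟨rfl, heI, he101, he021⟩ := he
  obtain ⟨rfl, hfI, hf101, hf021⟩ := hf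
  have hg' : g = directSum e f := by rw [hg, hk, take_firstStat]; rfl
  subst hg' hk hl
  exact ⟨⟨length_directSum, heI.directSum hfI, not_contains101_directSum hfI he101 hf101,
    not_contains021_directSum heI hfI he021 hf021⟩, firstStat_directSum⟩

/-- Lemma 7.4: the direct sum of `(101,021)`-avoiding inversion sequences. -/
theorem inv021_direct_sum (n m : ℕ) (hn : 1 ≤ n) (hm : 1 ≤ m) (e f : List ℕ)
    (he : e ∈ JSet n) (hf : f ∈ JSet m)
    (k l : ℕ) (hk : k = firstStat e) (hl : l = firstStat f)
    (g : List ℕ)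
    (hg : g = e.take k ++ f ++ (e.drop k).map (fun v => if v = 0 then 0 else v + m)) :
    g ∈ JSet (n + m) ∧ firstStat g = k + l :=
  inv021_direct_sum_general n m e f he hf k l hk hl g hg
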